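/- Let V_n be an increasing (in n) random sequence of subsets of a state space Q, let R : Q → Set Q be a reachability map, and suppose: for every state q, conditioned on q ∈ V_n, every q' ∈ R(q) satisfies lim_{w→∞} P(q' ∈ V_{n+w}) = 1. If q_0 ∈ V_1 almost surely and (q_0, q_1, ..., q_F) is a finite path with q_f ∈ R(q_{f-1}) for all f ∈ {1,...,F}, then lim_{n→∞} P(q_f ∈ V_n) = 1 for every f ∈ {0,...,F}. -/
import Mathlib


open MeasureTheory Filter ProbabilityTheory

/-- Probabilistic completeness along a feasible path: if the (random, monotone) vertex sets `V n`
satisfy a one-step reachability guarantee, and the initial state is in the tree almost surely,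
then every state along a finite feasible path is in the tree with probability tending to 1. -/
theorem path_in_tree_tendsto_one {Ω Q : Type*} [MeasurableSpace Ω]
    (μ : Measure Ω) [IsProbabilityMeasure μ]
    (V : ℕ → Ω → Set Q) (R : Q → Set Q)
    (hmono : ∀ ω n, V n ω ⊆ V (n + 1) ω)
    (hreach : ∀ (q : Q) (n : ℕ), ∀ q' ∈ R q,
      Tendsto (fun w => (μ[|{ω | q ∈ V n ω}]) {ω | q' ∈ V (n + w) ω}) atTop (nhds 1))
    (F : ℕ) (q : Fin (F + 1) → Q)
    (hinit : μ {ω | q 0 ∈ V 1 ω} = 1)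
    (hpath : ∀ f : Fin F, q f.succ ∈ R (q f.castSucc)) :
    ∀ f : Fin (F + 1), Tendsto (fun n => μ {ω | q f ∈ V n ω}) atTop (nhds 1) := by
  have hVm : ∀ ω, Monotone (fun n => V n ω) := fun ω =>
    monotone_nat_of_le_succ (fun n => hmono ω n)
  have hμmono : ∀ x : Q, Monotone (fun n => μ {ω | x ∈ V n ω}) := fun x n m hnm =>
    measure_mono (fun ω hω => hVm ω hnm hω)
  have key : ∀ x : Q, (1 : ENNReal) ≤ (⨆ n, μ {ω | x ∈ V n ω}) →
      Tendsto (fun n => μ {ω | x ∈ V n ω}) atTop (nhds 1) := by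
    intro x hx
    have h1 : (⨆ n, μ {ω | x ∈ V n ω}) = 1 :=
      le_antisymm (iSup_le fun n => prob_le_one) hx
    simpa [h1] using tendsto_atTop_iSup (hμmono x)
  intro f
  induction f using Fin.induction with
  | zero =>
    refine key _ ?_
    calc (1 : ENNReal) = μ {ω | q 0 ∈ V 1 ω} := hinit.symm
      _ ≤ ⨆ n, μ {ω | q 0 ∈ V n ω} := le_iSup (fun n => μ {ω | q 0 ∈ V n ω}) 1
  | succ f ih =>
    refine key _ ?_
    refine le_of_tendsto' ih (fun n => ?_)
    set A := {ω | q f.castSucc ∈ V n ω} with hAdef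
    by_cases hA : μ A = 0
    · simp [hA]
    · have hc := hreach (q f.castSucc) n (q f.succ) (hpath f)
      have hmul : Tendsto (fun w => μ A * (μ[|A]) {ω | q f.succ ∈ V (n + w) ω})
          atTop (nhds (μ A * 1)) :=
        ENNReal.Tendsto.const_mul hc (Or.inl one_ne_zero)
      rw [mul_one] at hmul
      refine le_of_tendsto' hmul (fun w => ?_)
      have heq : μ A * (μ[|A]) {ω | q f.succ ∈ V (n + w) ω}
          = μ.restrict A {ω | q f.succ ∈ V (n + w) ω} := by
        rw [ProbabilityTheory.cond, Measure.smul_apply, smul_eq_mul, ← mul_assoc,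
          ENNReal.mul_inv_cancel hA (measure_ne_top μ A), one_mul]
      rw [heq]
      calc μ.restrict A {ω | q f.succ ∈ V (n + w) ω}
          ≤ μ {ω | q f.succ ∈ V (n + w) ω} := Measure.restrict_le_self _
        _ ≤ ⨆ m, μ {ω | q f.succ ∈ V m ω} := le_iSup (fun m => μ {ω | q f.succ ∈ V m ω}) (n + w)
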